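/- (Fact 1) Let λ ≥ 0, let θ ∈ ℝ^d and let Σ be positive definite, and suppose θ − θ* ∈ λU_Σ. If x₁ is an optimal solution of the robust optimization problem with scale λ, center θ and shape Σ, and x₂ is an optimal solution of the robust optimization problem with scale 2λ, center θ* and shape Σ, then f*(x₁) ≤ f*(x₂). -/

import Mathlib

open MeasureTheory ProbabilityTheory Matrix
open scoped ENNReal Pointwise

/-- The ellipsoid `U_Σ = {u : uᵀ Σ⁻¹ u ≤ 1}`. -/
def USet {d : ℕ} (Sg : Matrix (Fin d) (Fin d) ℝ) : Set (Fin d → ℝ) :=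
  {u | u ⬝ᵥ (Sg⁻¹ *ᵥ u) ≤ 1}

/-- `r_k(x; Σ) = max_{u ∈ U_Σ} g_k(x, u)` where `g_k(x, θ) = θᵀ v_k(x)`. -/
noncomputable def rk {d m K : ℕ} (v : Fin K → (Fin m → ℝ) → (Fin d → ℝ))
    (k : Fin K) (x : Fin m → ℝ) (Sg : Matrix (Fin d) (Fin d) ℝ) : ℝ :=
  sSup ((fun u => u ⬝ᵥ v k x) '' USet Sg)

/-- `S(λ, Y; Σ)`, the set of parameter errors that are uniformly small over `Y`. -/
noncomputable def SErr {d m K : ℕ} (v : Fin K → (Fin m → ℝ) → (Fin d → ℝ))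
    (lam : ℝ) (Y : Set (Fin m → ℝ)) (Sg : Matrix (Fin d) (Fin d) ℝ) : Set (Fin d → ℝ) :=
  {Δ | ∀ k, ∀ y ∈ Y, |Δ ⬝ᵥ v k y| ≤ lam * rk v k y Sg}

/-- Feasibility for the robust optimization problem with scale `lam`, center `θ`, shape `Σ`. -/
def Feasible {d m K : ℕ} (X : Set (Fin m → ℝ)) (v : Fin K → (Fin m → ℝ) → (Fin d → ℝ))
    (lam : ℝ) (θ : Fin d → ℝ) (Sg : Matrix (Fin d) (Fin d) ℝ) (x : Fin m → ℝ) : Prop :=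
  x ∈ X ∧ ∀ k, ∀ u ∈ USet Sg, 0 ≤ (θ + lam • u) ⬝ᵥ v k x

/-- Optimal solution of the robust optimization problem. -/
def IsOptimal {d m K : ℕ} (X : Set (Fin m → ℝ)) (f : (Fin m → ℝ) → ℝ)
    (v : Fin K → (Fin m → ℝ) → (Fin d → ℝ))
    (lam : ℝ) (θ : Fin d → ℝ) (Sg : Matrix (Fin d) (Fin d) ℝ) (x : Fin m → ℝ) : Prop :=
  Feasible X v lam θ Sg x ∧ ∀ y, Feasible X v lam θ Sg y → f x ≤ f y

open Classical in
/-- The true objective `f*`, which is `∞` when a true constraint is violated. -/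
noncomputable def fStar {d m K : ℕ} (f : (Fin m → ℝ) → ℝ)
    (v : Fin K → (Fin m → ℝ) → (Fin d → ℝ)) (θs : Fin d → ℝ) (x : Fin m → ℝ) : EReal :=
  if ∀ k, 0 ≤ θs ⬝ᵥ v k x then (f x : EReal) else ⊤

/-- The standard Gaussian measure on `ℝ^d`. -/
noncomputable def stdGaussian (d : ℕ) : Measure (Fin d → ℝ) :=
  Measure.pi fun _ => gaussianReal 0 1

open Classical in
/-- The positive semidefinite square root (junk value `0` off the psd cone). -/
noncomputable def matSqrt {d : ℕ} (A : Matrix (Fin d) (Fin d) ℝ) : Matrix (Fin d) (Fin d) ℝ :=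
  if h : A.PosSemidef then
    (h.1.eigenvectorUnitary : Matrix (Fin d) (Fin d) ℝ) *
      diagonal ((↑) ∘ Real.sqrt ∘ h.1.eigenvalues) *
      (star h.1.eigenvectorUnitary : Matrix (Fin d) (Fin d) ℝ) else 0

/-- The centered Gaussian measure on `ℝ^d` with covariance `A`. -/
noncomputable def gaussOf {d : ℕ} (A : Matrix (Fin d) (Fin d) ℝ) : Measure (Fin d → ℝ) :=
  (stdGaussian d).map (fun z => matSqrt A *ᵥ z)

/-- The Euclidean norm on `Fin d → ℝ`. -/
noncomputable def euclNorm {d : ℕ} (z : Fin d → ℝ) : ℝ := Real.sqrt (∑ i, z i ^ 2)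

/-- Quantile function of the chi distribution with `d` degrees of freedom. -/
noncomputable def chiQuantile (d : ℕ) (p : ℝ) : ℝ :=
  sInf {t : ℝ | 0 ≤ t ∧ p ≤ (stdGaussian d {z | euclNorm z ≤ t}).toReal}

/-- The minimum spatial uniform bound `μ(p, Y; P, Σ)` (`⊤` when infeasible, `0` for `p ≤ 0`). -/
noncomputable def muB {d m K : ℕ} (v : Fin K → (Fin m → ℝ) → (Fin d → ℝ)) (p : ℝ)
    (Y : Set (Fin m → ℝ)) (P : Measure (Fin d → ℝ)) (Sg : Matrix (Fin d) (Fin d) ℝ) : ℝ≥0∞ :=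
  ⨅ (μ : ℝ) (_ : 0 ≤ μ ∧ ENNReal.ofReal p ≤ P (SErr v μ Y Sg)), ENNReal.ofReal μ

/-! Write `θ = θ* + λ u₀` with `u₀ ∈ U_Σ`. As `U_Σ` is symmetric, `θ* = θ + λ (-u₀)` is among the
parameters the first robust problem guards against, so `x₁` satisfies the true constraints and
`f*(x₁) = f(x₁)`. As `U_Σ` is convex, `θ + λ u = θ* + 2λ · (u₀ + u) / 2` for `u ∈ U_Σ`, so the
uncertainty set of the first problem lies inside that of the second; hence `x₂` is feasible for the
first problem and `f(x₁) ≤ f(x₂) ≤ f*(x₂)`. -/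

section Ellipsoid

variable {d : ℕ} {Sg : Matrix (Fin d) (Fin d) ℝ}

lemma neg_mem_USet {u : Fin d → ℝ} (hu : u ∈ USet Sg) : -u ∈ USet Sg := by
  simpa [USet, Matrix.mulVec_neg] using hu

lemma convex_USet (hSg : Sg⁻¹.PosSemidef) : Convex ℝ (USet Sg) := by
  intro a ha b hb s t hs ht hst
  have hQ : 0 ≤ (a - b) ⬝ᵥ (Sg⁻¹ *ᵥ (a - b)) := by
    simpa using hSg.re_dotProduct_nonneg (a - b)
  have hsym : b ⬝ᵥ (Sg⁻¹ *ᵥ a) = a ⬝ᵥ (Sg⁻¹ *ᵥ b) := by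
    have hT : Sg⁻¹ᵀ = Sg⁻¹ := by simpa using hSg.1.eq
    rw [dotProduct_mulVec, ← mulVec_transpose, dotProduct_comm, hT]
  simp only [USet, Set.mem_ofPred_eq] at ha hb ⊢
  simp only [mulVec_add, mulVec_sub, mulVec_smul, dotProduct_add, dotProduct_sub, add_dotProduct,
    sub_dotProduct, dotProduct_smul, smul_dotProduct, smul_eq_mul, hsym] at hQ ⊢
  -- `s Q(a) + t Q(b) - Q(s a + t b) = s t Q(a - b)` once `s + t = 1`
  obtain rfl : t = 1 - s := by linarith
  nlinarith [mul_nonneg hs ht]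

end Ellipsoid

section RobustFeasibility

variable {d m K : ℕ} {X : Set (Fin m → ℝ)} {v : Fin K → (Fin m → ℝ) → (Fin d → ℝ)}
  {lam : ℝ} {θ θ' : Fin d → ℝ} {Sg : Matrix (Fin d) (Fin d) ℝ} {x : Fin m → ℝ}

lemma Feasible.dotProduct_nonneg_of_sub_mem (hx : Feasible X v lam θ Sg x)
    (hθ : θ - θ' ∈ lam • USet Sg) (k : Fin K) : 0 ≤ θ' ⬝ᵥ v k x := by
  obtain ⟨u, hu, hθu : lam • u = θ - θ'⟩ := hθ
  have hcenter : θ + lam • -u = θ' := by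
    rw [smul_neg, hθu]
    abel
  exact hcenter ▸ hx.2 k (-u) (neg_mem_USet hu)

lemma Feasible.of_two_mul (hSg : Sg⁻¹.PosSemidef) (hx : Feasible X v (2 * lam) θ' Sg x)
    (hθ : θ - θ' ∈ lam • USet Sg) : Feasible X v lam θ Sg x := by
  obtain ⟨u₀, hu₀, hθu₀ : lam • u₀ = θ - θ'⟩ := hθ
  refine ⟨hx.1, fun k u hu => ?_⟩
  have hmid : (2⁻¹ : ℝ) • u₀ + (2⁻¹ : ℝ) • u ∈ USet Sg :=
    convex_USet hSg hu₀ hu (by norm_num) (by norm_num) (by norm_num)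
  have hcenter : θ' + (2 * lam) • ((2⁻¹ : ℝ) • u₀ + (2⁻¹ : ℝ) • u) = θ + lam • u := by
    rw [smul_add, smul_smul, smul_smul, show 2 * lam * 2⁻¹ = lam by ring, hθu₀]
    abel
  exact hcenter ▸ hx.2 k _ hmid

end RobustFeasibility

lemma fStar_le_fStar {d m K : ℕ} {f : (Fin m → ℝ) → ℝ} {v : Fin K → (Fin m → ℝ) → (Fin d → ℝ)}
    {θs : Fin d → ℝ} {x y : Fin m → ℝ} (hx : ∀ k, 0 ≤ θs ⬝ᵥ v k x) (hxy : f x ≤ f y) :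
    fStar f v θs x ≤ fStar f v θs y := by
  rw [fStar, if_pos hx]
  unfold fStar
  split_ifs
  · exact_mod_cast hxy
  · exact le_top

theorem stmt1_general {d m K : ℕ}
    (θstar : Fin d → ℝ) (v : Fin K → (Fin m → ℝ) → (Fin d → ℝ))
    (X : Set (Fin m → ℝ)) (f : (Fin m → ℝ) → ℝ)
    (lam : ℝ) (θ : Fin d → ℝ)
    (Sg : Matrix (Fin d) (Fin d) ℝ) (hSg : Sg.PosDef)
    (hθ : θ - θstar ∈ lam • USet Sg)
    (x₁ x₂ : Fin m → ℝ)
    (h1 : IsOptimal X f v lam θ Sg x₁)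
    (h2 : IsOptimal X f v (2 * lam) θstar Sg x₂) :
    fStar f v θstar x₁ ≤ fStar f v θstar x₂ :=
  fStar_le_fStar (h1.1.dotProduct_nonneg_of_sub_mem hθ)
    (h1.2 x₂ (h2.1.of_two_mul hSg.inv.posSemidef hθ))

/-- Fact 1: if `θ − θ* ∈ λU_Σ`, `x₁` is optimal for the robust problem with
scale `λ`, center `θ`, shape `Σ`, and `x₂` is optimal with scale `2λ`, center `θ*`, shape `Σ`,
then `f*(x₁) ≤ f*(x₂)`. -/
theorem stmt1 {d m K : ℕ} (hd : 1 ≤ d) (hm : 1 ≤ m) (hK : 1 ≤ K)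
    (θstar : Fin d → ℝ) (v : Fin K → (Fin m → ℝ) → (Fin d → ℝ))
    (X : Set (Fin m → ℝ)) (f : (Fin m → ℝ) → ℝ)
    (lam : ℝ) (hlam : 0 ≤ lam) (θ : Fin d → ℝ)
    (Sg : Matrix (Fin d) (Fin d) ℝ) (hSg : Sg.PosDef)
    (hθ : θ - θstar ∈ lam • USet Sg)
    (x₁ x₂ : Fin m → ℝ)
    (h1 : IsOptimal X f v lam θ Sg x₁)
    (h2 : IsOptimal X f v (2 * lam) θstar Sg x₂) :
    fStar f v θstar x₁ ≤ fStar f v θstar x₂ :=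
  stmt1_general θstar v X f lam θ Sg hSg hθ x₁ x₂ h1 h2
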